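/- Fix a ≠ 0 and let R satisfy 2(R−1)/R³ = a with R < 1, R ≠ 0, and set r₁ = R². Let C₁ = (16 − 8r₁ + 6ar₁² − a²r₁³)/(4(−2 + ar₁)). Then r₁ is a double root of the quartic q(r) = −16C₁² + 64r + 32C₁r − 16r² − 8aC₁r² + 8ar³ − a²r⁴, i.e., q(r₁) = 0 and q'(r₁) = 0. -/

import Mathlib

/-!
Completing the square gives `q a C r = 64 r - f(r)²` with `f(r) = a r² - 4 r + 4 C`, so `r₁` is a
double root exactly when `f(r₁)² = 64 r₁` and `f(r₁) f'(r₁) = 32`. The relation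
`a R³ = 2 R - 2` turns `C₁` into `(R² - 3 R) / 2`, and then `f(R²) = -8 R` and `R f'(R²) = -4`.
-/

def q (a C r : ℝ) : ℝ :=
  -16 * C^2 + 64 * r + 32 * C * r - 16 * r^2 - 8 * a * C * r^2 + 8 * a * r^3 - a^2 * r^4

theorem q_eq_sub_sq (a C r : ℝ) : q a C r = 64 * r - (a * r ^ 2 - 4 * r + 4 * C) ^ 2 := by
  unfold q
  ring

theorem hasDerivAt_q (a C r : ℝ) :
    HasDerivAt (q a C) (64 - 2 * (a * r ^ 2 - 4 * r + 4 * C) * (2 * a * r - 4)) r := by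
  have hf : HasDerivAt (fun r => a * r ^ 2 - 4 * r + 4 * C) (2 * a * r - 4) r := by
    refine ((((hasDerivAt_pow 2 r).const_mul a).fun_sub
      ((hasDerivAt_id' r).const_mul 4)).add_const (4 * C)).congr_deriv ?_
    norm_num
    ring
  rw [show q a C = fun r => 64 * r - (a * r ^ 2 - 4 * r + 4 * C) ^ 2 from funext (q_eq_sub_sq a C)]
  refine (((hasDerivAt_id' r).const_mul 64).fun_sub (hf.pow 2)).congr_deriv ?_
  norm_num

theorem mul_cube_eq_of_div_cube_eq {a R : ℝ} (hR : R ≠ 0) (hRa : 2 * (R - 1) / R ^ 3 = a) :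
    a * R ^ 3 = 2 * R - 2 := by
  rw [← hRa, div_mul_cancel₀ _ (pow_ne_zero 3 hR)]
  ring

section Tangency

variable {a R : ℝ} (h : a * R ^ 3 = 2 * R - 2)
include h

theorem C₁_eq_of_mul_cube_eq :
    (16 - 8 * R ^ 2 + 6 * a * (R ^ 2) ^ 2 - a ^ 2 * (R ^ 2) ^ 3) / (4 * (-2 + a * R ^ 2))
      = (R ^ 2 - 3 * R) / 2 := by
  have hden : -2 + a * R ^ 2 ≠ 0 := by
    intro h0
    have : (-2 + a * R ^ 2) * R = -2 := by linear_combination h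
    rw [h0, zero_mul] at this
    norm_num at this
  rw [div_eq_div_iff (mul_ne_zero four_ne_zero hden) two_ne_zero]
  linear_combination (2 * (-a * R ^ 3 + 2 * R + 8)) * h

theorem tangent_value :
    a * (R ^ 2) ^ 2 - 4 * R ^ 2 + 4 * ((R ^ 2 - 3 * R) / 2) = -8 * R := by
  linear_combination R * h

theorem tangent_slope : R * (2 * a * R ^ 2 - 4) = -4 := by
  linear_combination 2 * h

theorem q_sq_eq_zero : q a ((R ^ 2 - 3 * R) / 2) (R ^ 2) = 0 := by
  rw [q_eq_sub_sq, tangent_value h]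
  ring

theorem deriv_q_sq_eq_zero : deriv (q a ((R ^ 2 - 3 * R) / 2)) (R ^ 2) = 0 := by
  rw [(hasDerivAt_q _ _ _).deriv, tangent_value h]
  linear_combination 16 * tangent_slope h

end Tangency

theorem double_root_r1_general (a R : ℝ) (hR0 : R ≠ 0)
    (hRa : 2 * (R - 1) / R^3 = a) :
    let r₁ := R^2
    let C₁ := (16 - 8 * r₁ + 6 * a * r₁^2 - a^2 * r₁^3) / (4 * (-2 + a * r₁))
    q a C₁ r₁ = 0 ∧ deriv (q a C₁) r₁ = 0 := by
  intro r₁ C₁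
  have h := mul_cube_eq_of_div_cube_eq hR0 hRa
  have hC : C₁ = (R ^ 2 - 3 * R) / 2 := C₁_eq_of_mul_cube_eq h
  rw [hC]
  exact ⟨q_sq_eq_zero h, deriv_q_sq_eq_zero h⟩

theorem double_root_r1 (a R : ℝ) (ha : a ≠ 0) (hR0 : R ≠ 0) (hR1 : R < 1)
    (hRa : 2 * (R - 1) / R^3 = a) :
    let r₁ := R^2
    let C₁ := (16 - 8 * r₁ + 6 * a * r₁^2 - a^2 * r₁^3) / (4 * (-2 + a * r₁))
    q a C₁ r₁ = 0 ∧ deriv (q a C₁) r₁ = 0 :=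
  double_root_r1_general a R hR0 hRa
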